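/- Let d ≥ 1, let p, ρ : ℝ^d → ℝ be positive differentiable functions, and let k : ℝ^d → ℝ^d → ℝ be a kernel that is twice continuously differentiable. For a positive differentiable function r, define κ_r(x, y) = ⟨∇log r(x), ∇log r(y)⟩·k(x,y) + ⟨∇log r(x), ∇_y k(x,y)⟩ + ⟨∇log r(y), ∇_x k(x,y)⟩ + ∑_{i=1}^d ∂²k(x,y)/∂x_i ∂y_i, where ∇_x and ∇_y denote gradients in the first and second argument. Let w(x) = ρ(x)/p(x) and let κ̃_p denote the same expression computed with density p and with k replaced by the importance-weighted kernel k̃(x,y) = w(x)·w(y)·k(x,y). Then for all x, y ∈ ℝ^d, κ̃_p(x, y) = w(x)·w(y)·κ_ρ(x, y). (Key identity in the proof of Theorem 2, Appendix B.) -/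

import Mathlib

/-!
The Stein kernel sees the density only through its score, so importance weighting can be
moved from the kernel into the density. For `k̃(x, y) = w(x) w(y) k(x, y)` the product rule gives
`∇ₓk̃ = w(y) (w(x) ∇ₓk + k ∇w(x))`, and the product rule for the divergence turns the mixed trace
of `k̃` into `w(x) w(y) tr(∂ₓ∂ᵧk)` plus `w(x) ⟪∇w(y), ∇ₓk⟫ + w(y) ⟪∇w(x), ∇ᵧk⟫ + k ⟪∇w(x), ∇w(y)⟫`.
These extra terms are exactly the ones created by replacing the score `∇ log p` with
`∇ log (p w) = ∇ log p + ∇w / w`; since `p w = ρ` for `w = ρ / p`, the identity follows.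
-/

open Real
open scoped InnerProductSpace BigOperators

/-- Trace of the mixed second derivative `∑ᵢ ∂²k(x,y)/∂xᵢ∂yᵢ` of a kernel. -/
noncomputable def mixedTrace {d : ℕ}
    (k : EuclideanSpace ℝ (Fin d) → EuclideanSpace ℝ (Fin d) → ℝ)
    (x y : EuclideanSpace ℝ (Fin d)) : ℝ :=
  LinearMap.trace ℝ _
    ((fderiv ℝ (fun y' => gradient (fun x' => k x' y') x) y :
        EuclideanSpace ℝ (Fin d) →ₗ[ℝ] EuclideanSpace ℝ (Fin d)))

/-- The integrand `κ_r(x,y)` of the squared kernelized Stein discrepancy for a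
positive differentiable density `r` and kernel `k`. -/
noncomputable def kappa {d : ℕ} (r : EuclideanSpace ℝ (Fin d) → ℝ)
    (k : EuclideanSpace ℝ (Fin d) → EuclideanSpace ℝ (Fin d) → ℝ)
    (x y : EuclideanSpace ℝ (Fin d)) : ℝ :=
  ⟪gradient (fun z => Real.log (r z)) x, gradient (fun z => Real.log (r z)) y⟫_ℝ * k x y
  + ⟪gradient (fun z => Real.log (r z)) x, gradient (fun y' => k x y') y⟫_ℝ
  + ⟪gradient (fun z => Real.log (r z)) y, gradient (fun x' => k x' y) x⟫_ℝ
  + mixedTrace k x y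

open InnerProductSpace
open scoped Gradient

section Gradient

variable {F : Type*} [NormedAddCommGroup F] [InnerProductSpace ℝ F] [CompleteSpace F]
  {f g : F → ℝ} {x : F}

theorem gradient_fun_mul (hf : DifferentiableAt ℝ f x) (hg : DifferentiableAt ℝ g x) :
    ∇ (fun z => f z * g z) x = f x • ∇ g x + g x • ∇ f x := by
  simp only [gradient, fderiv_fun_mul hf hg, map_add, map_smul]

theorem gradient_const_mul (c : ℝ) (hg : DifferentiableAt ℝ g x) :
    ∇ (fun z => c * g z) x = c • ∇ g x := by
  simp only [gradient, fderiv_const_mul hg c, map_smul]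

theorem gradient_log (hf : DifferentiableAt ℝ f x) (hx : f x ≠ 0) :
    ∇ (fun z => Real.log (f z)) x = (f x)⁻¹ • ∇ f x := by
  simp only [gradient, (hf.hasFDerivAt.log hx).fderiv, map_smul]

end Gradient

theorem LinearMap.trace_fderiv_smul {F : Type*} [NormedAddCommGroup F] [InnerProductSpace ℝ F]
    [FiniteDimensional ℝ F] {c : F → ℝ} {V : F → F} {y : F}
    (hc : DifferentiableAt ℝ c y) (hV : DifferentiableAt ℝ V y) :
    LinearMap.trace ℝ F (fderiv ℝ (fun z => c z • V z) y : F →ₗ[ℝ] F)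
      = ⟪∇ c y, V y⟫_ℝ + c y * LinearMap.trace ℝ F (fderiv ℝ V y : F →ₗ[ℝ] F) := by
  rw [fderiv_fun_smul hc hV]
  simp [inner_gradient_left, add_comm]

theorem ContDiff.differentiable_gradient_comp_prodMk_left {E G : Type*} [NormedAddCommGroup E]
    [InnerProductSpace ℝ E] [CompleteSpace E] [NormedAddCommGroup G] [NormedSpace ℝ G]
    {f : E × G → ℝ} (hf : ContDiff ℝ 2 f) (x : E) :
    Differentiable ℝ (fun y => ∇ (fun x' => f (x', y)) x) := by
  have hpartial : ∀ y, ∇ (fun x' => f (x', y)) x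
      = (toDual ℝ E).symm ((fderiv ℝ f (x, y)).comp (ContinuousLinearMap.inl ℝ E G)) := fun y =>
    congrArg _ ((hf.differentiable two_ne_zero (x, y)).hasFDerivAt.comp x
      (hasFDerivAt_prodMk_left x y)).fderiv
  simp only [hpartial]
  have hdf : Differentiable ℝ (fderiv ℝ f) := (hf.fderiv_right le_rfl).differentiable one_ne_zero
  exact fun y => (toDual ℝ E).symm.differentiable.differentiableAt.comp y
    (((hdf.comp ((differentiable_const x).prodMk differentiable_id)) y).clm_comp
      (differentiableAt_const _))

section WeightedKernel

variable {d : ℕ} {k : EuclideanSpace ℝ (Fin d) → EuclideanSpace ℝ (Fin d) → ℝ}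
  {w : EuclideanSpace ℝ (Fin d) → ℝ}

theorem gradient_weighted_kernel_fst (hw : Differentiable ℝ w)
    (hkx : ∀ y, Differentiable ℝ (fun x => k x y)) (x y : EuclideanSpace ℝ (Fin d)) :
    ∇ (fun x' => w x' * w y * k x' y) x
      = (w y * k x y) • ∇ w x + (w x * w y) • ∇ (fun x' => k x' y) x := by
  have hprod : (fun x' => w x' * w y * k x' y) = fun x' => w x' * (w y * k x' y) := by
    funext x'; ring
  rw [hprod, gradient_fun_mul (hw x) ((hkx y x).const_mul _), gradient_const_mul _ (hkx y x)]
  module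

theorem gradient_weighted_kernel_snd (hw : Differentiable ℝ w)
    (hky : ∀ x, Differentiable ℝ (fun y => k x y)) (x y : EuclideanSpace ℝ (Fin d)) :
    ∇ (fun y' => w x * w y' * k x y') y
      = (w x * k x y) • ∇ w y + (w x * w y) • ∇ (fun y' => k x y') y := by
  have hprod : (fun y' => w x * w y' * k x y') = fun y' => w x * (w y' * k x y') := by
    funext y'; ring
  rw [hprod, gradient_const_mul _ ((hw y).fun_mul (hky x y)), gradient_fun_mul (hw y) (hky x y)]
  module

theorem mixedTrace_weighted_kernel (hw : Differentiable ℝ w)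
    (hkx : ∀ y, Differentiable ℝ (fun x => k x y)) (hky : ∀ x, Differentiable ℝ (fun y => k x y))
    (hmixed : ∀ x, Differentiable ℝ (fun y => ∇ (fun x' => k x' y) x))
    (x y : EuclideanSpace ℝ (Fin d)) :
    mixedTrace (fun x y => w x * w y * k x y) x y
      = w x * w y * mixedTrace k x y + w x * ⟪∇ w y, ∇ (fun x' => k x' y) x⟫_ℝ
        + w y * ⟪∇ w x, ∇ (fun y' => k x y') y⟫_ℝ + k x y * ⟪∇ w x, ∇ w y⟫_ℝ := by
  have hfield : (fun y' => ∇ (fun x' => w x' * w y' * k x' y') x)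
      = fun y' => (w y' * k x y') • ∇ w x + (w x * w y') • ∇ (fun x' => k x' y') x :=
    funext (gradient_weighted_kernel_fst hw hkx x)
  have hwk : DifferentiableAt ℝ (fun y' => w y' * k x y') y := (hw y).fun_mul (hky x y)
  have hww : DifferentiableAt ℝ (fun y' => w x * w y') y := (hw y).const_mul _
  unfold mixedTrace
  rw [hfield, fderiv_fun_add (hwk.smul_const _) (hww.fun_smul (hmixed x y)),
    ContinuousLinearMap.toLinearMap_add, map_add,
    LinearMap.trace_fderiv_smul hwk (differentiableAt_const _),
    LinearMap.trace_fderiv_smul hww (hmixed x y),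
    gradient_fun_mul (hw y) (hky x y), gradient_const_mul _ (hw y)]
  simp only [fderiv_fun_const, Pi.zero_apply, ContinuousLinearMap.toLinearMap_zero, map_zero,
    real_inner_comm (∇ w x), inner_add_right, real_inner_smul_left, real_inner_smul_right]
  ring

theorem kappa_weighted_kernel (hw : Differentiable ℝ w)
    (hkx : ∀ y, Differentiable ℝ (fun x => k x y)) (hky : ∀ x, Differentiable ℝ (fun y => k x y))
    (hmixed : ∀ x, Differentiable ℝ (fun y => ∇ (fun x' => k x' y) x))
    {p : EuclideanSpace ℝ (Fin d) → ℝ} (hp : Differentiable ℝ p)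
    (hp0 : ∀ z, p z ≠ 0) (hw0 : ∀ z, w z ≠ 0) (x y : EuclideanSpace ℝ (Fin d)) :
    kappa p (fun x y => w x * w y * k x y) x y = w x * w y * kappa (fun z => p z * w z) k x y := by
  have hscore : ∀ z, ∇ (fun z => Real.log (p z * w z)) z
      = ∇ (fun z => Real.log (p z)) z + (w z)⁻¹ • ∇ w z := fun z => by
    rw [gradient_log ((hp z).fun_mul (hw z)) (mul_ne_zero (hp0 z) (hw0 z)),
      gradient_fun_mul (hp z) (hw z), gradient_log (hp z) (hp0 z)]
    match_scalars <;> field_simp [hp0 z, hw0 z]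
  unfold kappa
  rw [mixedTrace_weighted_kernel hw hkx hky hmixed, gradient_weighted_kernel_fst hw hkx,
    gradient_weighted_kernel_snd hw hky, hscore x, hscore y]
  simp only [inner_add_left, inner_add_right, real_inner_smul_left, real_inner_smul_right,
    real_inner_comm (∇ w x)]
  field_simp [hw0 x, hw0 y]
  ring

end WeightedKernel

theorem gf_svgd_stmt4_general (d : ℕ)
    (p ρ : EuclideanSpace ℝ (Fin d) → ℝ)
    (hp : ∀ y, 0 < p y) (hρ : ∀ y, 0 < ρ y)
    (hpd : Differentiable ℝ p) (hρd : Differentiable ℝ ρ)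
    (k : EuclideanSpace ℝ (Fin d) → EuclideanSpace ℝ (Fin d) → ℝ)
    (hk : ContDiff ℝ 2 (fun q : EuclideanSpace ℝ (Fin d) × EuclideanSpace ℝ (Fin d) => k q.1 q.2))
    (w : EuclideanSpace ℝ (Fin d) → ℝ) (hw : w = fun y => ρ y / p y)
    (ktilde : EuclideanSpace ℝ (Fin d) → EuclideanSpace ℝ (Fin d) → ℝ)
    (hktilde : ktilde = fun x y => w x * w y * k x y) :
    ∀ x y, kappa p ktilde x y = w x * w y * kappa ρ k x y := by
  have hp0 : ∀ z, p z ≠ 0 := fun z => (hp z).ne'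
  have hw0 : ∀ z, w z ≠ 0 := fun z => hw ▸ (div_pos (hρ z) (hp z)).ne'
  have hwd : Differentiable ℝ w := by
    rw [hw]
    simpa only [div_eq_mul_inv] using hρd.fun_mul (hpd.fun_inv hp0)
  have hρ_eq : ρ = fun z => p z * w z := by
    funext z; rw [hw]; field_simp [hp0 z]
  have hkd := hk.differentiable two_ne_zero
  rw [hktilde, hρ_eq]
  exact kappa_weighted_kernel hwd
    (fun y => hkd.comp (differentiable_id.prodMk (differentiable_const y)))
    (fun x => hkd.comp ((differentiable_const x).prodMk differentiable_id))
    hk.differentiable_gradient_comp_prodMk_left hpd hp0 hw0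

/-- Key identity in the proof of Theorem 2 (Appendix B):
`κ̃_p(x,y) = w(x)·w(y)·κ_ρ(x,y)` where `κ̃_p` is computed with density `p` and
the importance-weighted kernel `k̃(x,y) = w(x)w(y)k(x,y)`, `w = ρ/p`. -/
theorem gf_svgd_stmt4 (d : ℕ) (hd : 1 ≤ d)
    (p ρ : EuclideanSpace ℝ (Fin d) → ℝ)
    (hp : ∀ y, 0 < p y) (hρ : ∀ y, 0 < ρ y)
    (hpd : Differentiable ℝ p) (hρd : Differentiable ℝ ρ)
    (k : EuclideanSpace ℝ (Fin d) → EuclideanSpace ℝ (Fin d) → ℝ)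
    (hk : ContDiff ℝ 2 (fun q : EuclideanSpace ℝ (Fin d) × EuclideanSpace ℝ (Fin d) => k q.1 q.2))
    (w : EuclideanSpace ℝ (Fin d) → ℝ) (hw : w = fun y => ρ y / p y)
    (ktilde : EuclideanSpace ℝ (Fin d) → EuclideanSpace ℝ (Fin d) → ℝ)
    (hktilde : ktilde = fun x y => w x * w y * k x y) :
    ∀ x y, kappa p ktilde x y = w x * w y * kappa ρ k x y :=
  gf_svgd_stmt4_general d p ρ hp hρ hpd hρd k hk w hw ktilde hktilde
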